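/- For every n-qubit state ρ with ρ ≠ I/2^n (the maximally mixed state) and every real α ≥ 1/2 with α ≠ 1, the filtered magic witness is bounded by the filtered stabilizer norm: W̃_α(ρ) ≤ 2 ln D̃(ρ). -/

import Mathlib

open Matrix Complex BigOperators
open scoped ComplexOrder

noncomputable section

/-- Index type for `n` qubits: functions `Fin n → Fin 2` (cardinality `2^n`). -/
abbrev QIdx (n : ℕ) := Fin n → Fin 2

/-- The four single-qubit Pauli matrices: `σ⁰ = I`, `σ¹ = σˣ`, `σ² = σᶻ`, `σ³ = σʸ`. -/
def pauliMat : Fin 4 → Matrix (Fin 2) (Fin 2) ℂ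
  | 0 => 1
  | 1 => !![0, 1; 1, 0]
  | 2 => !![1, 0; 0, -1]
  | 3 => !![0, -Complex.I; Complex.I, 0]

/-- The Pauli string `σ^{a_1} ⊗ ⋯ ⊗ σ^{a_n}` as a `2^n × 2^n` matrix. -/
def pauliString {n : ℕ} (a : Fin n → Fin 4) : Matrix (QIdx n) (QIdx n) ℂ :=
  fun i j => ∏ k, pauliMat (a k) (i k) (j k)

/-- An `n`-qubit state: positive semidefinite with unit trace. -/
def IsState {n : ℕ} (ρ : Matrix (QIdx n) (QIdx n) ℂ) : Prop :=
  ρ.PosSemidef ∧ ρ.trace = 1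

/-- The `α`-moment of the Pauli spectrum `A_α(ρ) = 2^{-n} ∑_P |tr(ρP)|^{2α}`. -/
def Amom {n : ℕ} (α : ℝ) (ρ : Matrix (QIdx n) (QIdx n) ℂ) : ℝ :=
  ((2:ℝ)^n)⁻¹ * ∑ a : Fin n → Fin 4, (‖(ρ * pauliString a).trace‖) ^ (2 * α)

/-- The 2-Rényi entropy `S₂(ρ) = -ln tr(ρ²)`. -/
def S2 {n : ℕ} (ρ : Matrix (QIdx n) (QIdx n) ℂ) : ℝ :=
  - Real.log ((ρ * ρ).trace.re)

/-- The magic witness `W_α(ρ) = (1/(1-α)) ln A_α(ρ) - ((1-2α)/(1-α)) S₂(ρ)`. -/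
def Wit {n : ℕ} (α : ℝ) (ρ : Matrix (QIdx n) (QIdx n) ℂ) : ℝ :=
  (1 / (1 - α)) * Real.log (Amom α ρ) - ((1 - 2*α)/(1 - α)) * S2 ρ

/-- The stabilizer norm `D(ρ) = A_{1/2}(ρ) = 2^{-n} ∑_P |tr(ρP)|`. -/
def Dnorm {n : ℕ} (ρ : Matrix (QIdx n) (QIdx n) ℂ) : ℝ :=
  Amom (1/2) ρ

/-- A Clifford unitary: unitary mapping every Pauli string to `±` a Pauli string. -/
def IsCliffordUnitary {n : ℕ} (U : Matrix (QIdx n) (QIdx n) ℂ) : Prop :=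
  U ∈ Matrix.unitaryGroup (QIdx n) ℂ ∧
    ∀ a : Fin n → Fin 4, ∃ (b : Fin n → Fin 4) (ε : ℝ),
      (ε = 1 ∨ ε = -1) ∧ U * pauliString a * Uᴴ = (ε : ℂ) • pauliString b

/-- The computational all-zeros basis vector `|0⟩^{⊗n}`. -/
def zeroVec (n : ℕ) : QIdx n → ℂ :=
  fun i => if (∀ k, i k = 0) then 1 else 0

/-- A pure stabilizer state vector: `U|0⟩^{⊗n}` for a Clifford unitary `U`. -/
def IsPureStab {n : ℕ} (ψ : QIdx n → ℂ) : Prop :=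
  ∃ U, IsCliffordUnitary U ∧ ψ = U.mulVec (zeroVec n)

/-- The rank-one projector `|ψ⟩⟨ψ|`. -/
def proj {n : ℕ} (ψ : QIdx n → ℂ) : Matrix (QIdx n) (QIdx n) ℂ :=
  Matrix.vecMulVec ψ (star ψ)

/-- A mixed stabilizer state: a finite convex combination of pure stabilizer projectors. -/
def IsMixedStab {n : ℕ} (ρ : Matrix (QIdx n) (QIdx n) ℂ) : Prop :=
  ∃ (k : ℕ) (p : Fin k → ℝ) (ψ : Fin k → QIdx n → ℂ),
    (∀ i, 0 ≤ p i) ∧ (∑ i, p i = 1) ∧ (∀ i, IsPureStab (ψ i)) ∧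
    ρ = ∑ i, (p i : ℂ) • proj (ψ i)

/-- The set of values `ln ∑ᵢ |xᵢ|` over finite real stabilizer decompositions of `ρ`. -/
def StabDecomps {n : ℕ} (ρ : Matrix (QIdx n) (QIdx n) ℂ) : Set ℝ :=
  { r | ∃ (k : ℕ) (x : Fin k → ℝ) (ψ : Fin k → QIdx n → ℂ),
      (∀ i, IsPureStab (ψ i)) ∧ ρ = ∑ i, (x i : ℂ) • proj (ψ i) ∧
      r = Real.log (∑ i, |x i|) }

/-- The log-free robustness of magic. -/
def LR {n : ℕ} (ρ : Matrix (QIdx n) (QIdx n) ℂ) : ℝ := sInf (StabDecomps ρ)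

open Classical in
/-- Positive-semidefinite square root (junk value `0` off the PSD cone). -/
def psdSqrt {n : ℕ} (A : Matrix (QIdx n) (QIdx n) ℂ) : Matrix (QIdx n) (QIdx n) ℂ :=
  if h : A.PosSemidef then
    (h.1.eigenvectorUnitary : Matrix (QIdx n) (QIdx n) ℂ) *
      diagonal ((↑) ∘ (√·) ∘ h.1.eigenvalues) *
      (star (h.1.eigenvectorUnitary : Matrix (QIdx n) (QIdx n) ℂ))
  else 0

/-- The Uhlmann fidelity `F(ρ,σ) = (tr √(√ρ σ √ρ))²`. -/
def fidelity {n : ℕ} (ρ σ : Matrix (QIdx n) (QIdx n) ℂ) : ℝ :=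
  ((psdSqrt (psdSqrt ρ * σ * psdSqrt ρ)).trace.re) ^ 2

/-- The stabilizer fidelity `D_F(ρ) = inf { -ln F(ρ,σ) : σ a mixed stabilizer state }`. -/
def DF {n : ℕ} (ρ : Matrix (QIdx n) (QIdx n) ℂ) : ℝ :=
  sInf { r | ∃ σ, IsMixedStab σ ∧ r = - Real.log (fidelity ρ σ) }

/-- Filtered Pauli moment `Ã_α(ρ) = (2^n A_α(ρ) - 1)/(2^n - 1)`. -/
def Atil {n : ℕ} (α : ℝ) (ρ : Matrix (QIdx n) (QIdx n) ℂ) : ℝ :=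
  ((2:ℝ)^n * Amom α ρ - 1) / ((2:ℝ)^n - 1)

/-- Filtered stabilizer norm `D̃(ρ) = (2^n D(ρ) - 1)/(2^n - 1)`. -/
def Dtil {n : ℕ} (ρ : Matrix (QIdx n) (QIdx n) ℂ) : ℝ :=
  ((2:ℝ)^n * Dnorm ρ - 1) / ((2:ℝ)^n - 1)

/-- Filtered magic witness `W̃_α(ρ) = (1/(1-α)) ln Ã_α(ρ) + ((1-2α)/(1-α)) ln Ã₁(ρ)`. -/
def Wtil {n : ℕ} (α : ℝ) (ρ : Matrix (QIdx n) (QIdx n) ℂ) : ℝ :=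
  (1/(1-α)) * Real.log (Atil α ρ) + ((1 - 2*α)/(1-α)) * Real.log (Atil 1 ρ)

/-- The maximally mixed state `I/2^n`. -/
def maxMixed (n : ℕ) : Matrix (QIdx n) (QIdx n) ℂ := ((2:ℂ)^n)⁻¹ • 1

/-- The single-qubit T-state vector `|T⟩ = (|0⟩ + e^{-iπ/4}|1⟩)/√2`. -/
def Tket : QIdx 1 → ℂ :=
  fun i => if i 0 = 0 then (Real.sqrt 2 : ℂ)⁻¹
           else Complex.exp (-(Real.pi/4 : ℂ) * Complex.I) * (Real.sqrt 2 : ℂ)⁻¹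

/-- The depolarized T-state `ρ_p = (1-p)|T⟩⟨T| + p·I₂/2`. -/
def rhoDep (p : ℝ) : Matrix (QIdx 1) (QIdx 1) ℂ :=
  ((1 - p : ℝ) : ℂ) • proj Tket + ((p : ℝ) : ℂ) • (((2:ℂ))⁻¹ • 1)

/-! Since `tr(ρ I) = 1`, the filtered moment `Ã_α(ρ)` equals
`(2^n - 1)⁻¹ ∑_{P ≠ I} |tr(ρP)|^{2α}`. By Hölder's inequality,
`p ↦ ln ((2^n - 1)⁻¹ ∑_{P ≠ I} |tr(ρP)|^p)` is convex on `p > 0`, and `W̃_α(ρ) ≤ 2 ln D̃(ρ)`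
is the comparison of the secant slopes of this function from `p = 1` to `p = 2` and to
`p = 2α`. -/

open Real Set Finset

theorem sum_mul_rpow_le_rpow_mul_rpow {ι : Type*} (s : Finset ι) {w t : ι → ℝ}
    (hw : ∀ i ∈ s, 0 ≤ w i) (ht : ∀ i ∈ s, 0 ≤ t i) {x y a b : ℝ}
    (hxy : a * x + b * y ≠ 0) (ha : 0 < a) (hb : 0 < b) (hab : a + b = 1) :
    ∑ i ∈ s, w i * t i ^ (a * x + b * y)
      ≤ (∑ i ∈ s, w i * t i ^ x) ^ a * (∑ i ∈ s, w i * t i ^ y) ^ b := by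
  have hsplit : ∀ i ∈ s, w i * t i ^ (a * x + b * y)
      = (w i * t i ^ x) ^ a * (w i * t i ^ y) ^ b := by
    intro i hi
    have hw' := hw i hi
    have ht' := ht i hi
    rw [mul_rpow hw' (rpow_nonneg ht' _), mul_rpow hw' (rpow_nonneg ht' _),
      ← rpow_mul ht', ← rpow_mul ht', mul_mul_mul_comm, ← rpow_add' hw' (by simp [hab]), hab,
      rpow_one, ← rpow_add' ht' (by rwa [mul_comm x, mul_comm y]), mul_comm x, mul_comm y]
  have hpow : ∀ c : ℝ, 0 < c → ∀ z : ℝ,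
      ∑ i ∈ s, ((w i * t i ^ z) ^ c) ^ c⁻¹ = ∑ i ∈ s, w i * t i ^ z :=
    fun c hc z => sum_congr rfl fun i hi =>
      rpow_rpow_inv (mul_nonneg (hw i hi) (rpow_nonneg (ht i hi) _)) hc.ne'
  have hHolder := inner_le_Lp_mul_Lq_of_nonneg s (Real.HolderConjugate.inv_inv ha hb hab)
    (f := fun i => (w i * t i ^ x) ^ a) (g := fun i => (w i * t i ^ y) ^ b)
    (fun i hi => rpow_nonneg (mul_nonneg (hw i hi) (rpow_nonneg (ht i hi) _)) _)
    (fun i hi => rpow_nonneg (mul_nonneg (hw i hi) (rpow_nonneg (ht i hi) _)) _)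
  rw [sum_congr rfl hsplit]
  simpa only [hpow a ha, hpow b hb, one_div, inv_inv] using hHolder

theorem convexOn_log_sum_mul_rpow {ι : Type*} (s : Finset ι) {w t : ι → ℝ}
    (hw : ∀ i ∈ s, 0 ≤ w i) (ht : ∀ i ∈ s, 0 ≤ t i) :
    ConvexOn ℝ (Ioi (0 : ℝ)) fun p => Real.log (∑ i ∈ s, w i * t i ^ p) := by
  by_cases hpos : ∃ i ∈ s, 0 < w i ∧ 0 < t i
  · obtain ⟨j, hj, hwj, htj⟩ := hpos
    have hS : ∀ p : ℝ, 0 < ∑ i ∈ s, w i * t i ^ p := fun p =>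
      (mul_pos hwj (rpow_pos_of_pos htj p)).trans_le <|
        single_le_sum (fun i hi => mul_nonneg (hw i hi) (rpow_nonneg (ht i hi) p)) hj
    refine convexOn_iff_forall_pos.mpr ⟨convex_Ioi 0, fun x hx y hy a b ha hb hab => ?_⟩
    have hxy : a * x + b * y ≠ 0 := by
      have : (0 : ℝ) < x := hx
      have : (0 : ℝ) < y := hy
      positivity
    calc Real.log (∑ i ∈ s, w i * t i ^ (a • x + b • y))
        ≤ Real.log ((∑ i ∈ s, w i * t i ^ x) ^ a * (∑ i ∈ s, w i * t i ^ y) ^ b) :=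
          Real.log_le_log (hS _) (sum_mul_rpow_le_rpow_mul_rpow s hw ht hxy ha hb hab)
      _ = a • Real.log (∑ i ∈ s, w i * t i ^ x)
            + b • Real.log (∑ i ∈ s, w i * t i ^ y) := by
          rw [Real.log_mul (rpow_pos_of_pos (hS x) a).ne' (rpow_pos_of_pos (hS y) b).ne',
            Real.log_rpow (hS x), Real.log_rpow (hS y), smul_eq_mul, smul_eq_mul]
  · -- every term vanishes for `p > 0`, and `Real.log 0 = 0`
    push Not at hpos
    refine (convexOn_const 0 (convex_Ioi 0)).congr fun p (hp : 0 < p) => ?_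
    rw [sum_eq_zero, Real.log_zero]
    intro i hi
    rcases (hw i hi).eq_or_lt with hwi | hwi
    · rw [← hwi, zero_mul]
    · rw [← (ht i hi).antisymm (hpos i hi hwi), zero_rpow hp.ne', mul_zero]

theorem ConvexOn.witness_le_two_mul {f : ℝ → ℝ} {s : Set ℝ} (hf : ConvexOn ℝ s f)
    (h1 : 1 ∈ s) (h2 : 2 ∈ s) {α : ℝ} (h2α : 2 * α ∈ s) (hα : 1 / 2 ≤ α) (hα1 : α ≠ 1) :
    1 / (1 - α) * f (2 * α) + (1 - 2 * α) / (1 - α) * f 2 ≤ 2 * f 1 := by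
  rcases hα.eq_or_lt with rfl | hα
  · norm_num
  have hα1' : 1 - α ≠ 0 := sub_ne_zero.mpr hα1.symm
  have hcomb : 1 / (1 - α) * f (2 * α) + (1 - 2 * α) / (1 - α) * f 2 - 2 * f 1
      = (f (2 * α) - f 1 - (2 * α - 1) * (f 2 - f 1)) / (1 - α) := by
    field_simp
    ring
  rw [← sub_nonpos, hcomb]
  rcases lt_or_gt_of_ne hα1 with hlt | hgt
  · have hslope := hf.secant_mono h1 h2α h2 (by linarith) (by norm_num) (by linarith)
    rw [div_le_div_iff₀ (by linarith) (by norm_num)] at hslope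
    exact div_nonpos_of_nonpos_of_nonneg (by linarith) (by linarith)
  · have hslope := hf.secant_mono h1 h2 h2α (by norm_num) (by linarith) (by linarith)
    rw [div_le_div_iff₀ (by norm_num) (by linarith)] at hslope
    exact div_nonpos_of_nonneg_of_nonpos (by linarith) (by linarith)

theorem pauliString_zero (n : ℕ) : pauliString (0 : Fin n → Fin 4) = 1 := by
  ext i j
  simp [pauliString, pauliMat, Matrix.one_apply, Finset.prod_ite_zero, funext_iff]

theorem Atil_eq_sum_erase_zero {n : ℕ} {ρ : Matrix (QIdx n) (QIdx n) ℂ} (hρ : ρ.trace = 1)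
    (β : ℝ) :
    Atil β ρ =
      ∑ a ∈ univ.erase 0, ((2 : ℝ) ^ n - 1)⁻¹ * ‖(ρ * pauliString a).trace‖ ^ (2 * β) := by
  rw [Atil, Amom, ← mul_assoc, mul_inv_cancel₀ (by positivity), one_mul,
    ← add_sum_erase _ _ (mem_univ 0), pauliString_zero, Matrix.mul_one, hρ, norm_one, one_rpow,
    add_sub_cancel_left, ← mul_sum, div_eq_inv_mul]

theorem filtered_witness_le_two_log_filtered_stabNorm_general {n : ℕ}
    (ρ : Matrix (QIdx n) (QIdx n) ℂ) (hρ : IsState ρ)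
    (α : ℝ) (hα : (1:ℝ)/2 ≤ α) (hα1 : α ≠ 1) :
    Wtil α ρ ≤ 2 * Real.log (Dtil ρ) := by
  set f : ℝ → ℝ := fun p =>
    Real.log (∑ a ∈ univ.erase 0, ((2 : ℝ) ^ n - 1)⁻¹ * ‖(ρ * pauliString a).trace‖ ^ p)
  have hf : ConvexOn ℝ (Ioi 0) f :=
    convexOn_log_sum_mul_rpow _
      (fun _ _ => inv_nonneg.mpr (sub_nonneg.mpr (one_le_pow₀ one_le_two)))
      fun _ _ => norm_nonneg _
  have hW : Wtil α ρ = 1 / (1 - α) * f (2 * α) + (1 - 2 * α) / (1 - α) * f 2 := by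
    simp only [Wtil, Atil_eq_sum_erase_zero hρ.2, f, mul_one]
  have hD : Real.log (Dtil ρ) = f 1 := by
    rw [show Dtil ρ = Atil (1 / 2) ρ from rfl, Atil_eq_sum_erase_zero hρ.2]
    norm_num [f]
  rw [hW, hD]
  exact hf.witness_le_two_mul (by norm_num) (by norm_num) (mem_Ioi.mpr (by linarith)) hα hα1

/-- for `ρ ≠ I/2^n` and `α ≥ 1/2`, `α ≠ 1`, the filtered witness
is bounded by twice the log of the filtered stabilizer norm:
`W̃_α(ρ) ≤ 2 ln D̃(ρ)`. -/
theorem filtered_witness_le_two_log_filtered_stabNorm {n : ℕ}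
    (ρ : Matrix (QIdx n) (QIdx n) ℂ) (hρ : IsState ρ) (hne : ρ ≠ maxMixed n)
    (α : ℝ) (hα : (1:ℝ)/2 ≤ α) (hα1 : α ≠ 1) :
    Wtil α ρ ≤ 2 * Real.log (Dtil ρ) :=
  filtered_witness_le_two_log_filtered_stabNorm_general ρ hρ α hα hα1

end
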